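/- Let μ > 0. For t ∈ ℝ and H > 0 define u₁(t,H) = (H/√(H²+4μ²))·sin t and u₂(t,H) = (H/√(H²+4μ²))·cos t, and let w : (0,∞) → ℝ be differentiable with w'(H) = √(1 + 16μ⁴/(H²+4μ²)³) for all H > 0. Then for all t ∈ ℝ and H > 0: (i) ((∂u₁/∂t)(t,H))² + ((∂u₂/∂t)(t,H))² = H²/(H²+4μ²); (ii) (w'(H))² - ((∂u₁/∂H)(t,H))² - ((∂u₂/∂H)(t,H))² = 1; (iii) (∂u₁/∂t)(t,H)·(∂u₁/∂H)(t,H) + (∂u₂/∂t)(t,H)·(∂u₂/∂H)(t,H) = 0. Here ∂/∂t and ∂/∂H denote derivatives of the one-variable slices. -/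

import Mathlib

/-- Kasner embedding coordinate `u₁`. -/
noncomputable def u1K (μ t H : ℝ) : ℝ :=
  H / Real.sqrt (H ^ 2 + 4 * μ ^ 2) * Real.sin t

/-- Kasner embedding coordinate `u₂`. -/
noncomputable def u2K (μ t H : ℝ) : ℝ :=
  H / Real.sqrt (H ^ 2 + 4 * μ ^ 2) * Real.cos t

/-- The Kasner isometry identities for the embedding of the exterior
Schwarzschild solution (in the Kasner chart) into the Kasner manifold. -/
theorem kasner_isometry_identities (μ : ℝ) (hμ : 0 < μ)
    (w : ℝ → ℝ)
    (hw : ∀ H : ℝ, 0 < H →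
      HasDerivAt w (Real.sqrt (1 + 16 * μ ^ 4 / (H ^ 2 + 4 * μ ^ 2) ^ 3)) H)
    (t H : ℝ) (hH : 0 < H) :
    ((deriv (fun t' => u1K μ t' H) t) ^ 2 + (deriv (fun t' => u2K μ t' H) t) ^ 2
      = H ^ 2 / (H ^ 2 + 4 * μ ^ 2)) ∧
    ((deriv w H) ^ 2 - (deriv (fun H' => u1K μ t H') H) ^ 2
      - (deriv (fun H' => u2K μ t H') H) ^ 2 = 1) ∧
    (deriv (fun t' => u1K μ t' H) t * deriv (fun H' => u1K μ t H') H
      + deriv (fun t' => u2K μ t' H) t * deriv (fun H' => u2K μ t H') H = 0) := by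
  have hD : (0:ℝ) < H ^ 2 + 4 * μ ^ 2 := by positivity
  set D : ℝ := H ^ 2 + 4 * μ ^ 2 with hDdef
  set S : ℝ := Real.sqrt D with hSdef
  have hS : 0 < S := Real.sqrt_pos.mpr hD
  have hS2 : S ^ 2 = D := Real.sq_sqrt hD.le
  set f : ℝ := H / S with hfdef
  set A : ℝ := 4 * μ ^ 2 / (S * D) with hAdef
  -- derivative of the inner sqrt function
  have hsq : HasDerivAt (fun H' : ℝ => H' ^ 2 + 4 * μ ^ 2) (2 * H) H := by
    simpa using ((hasDerivAt_pow 2 H).add_const (4 * μ ^ 2))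
  have hsqrt : HasDerivAt (fun H' : ℝ => Real.sqrt (H' ^ 2 + 4 * μ ^ 2))
      (2 * H / (2 * S)) H := hsq.sqrt hD.ne'
  -- derivative of f = H / sqrt (H²+4μ²)
  have hf : HasDerivAt (fun H' : ℝ => H' / Real.sqrt (H' ^ 2 + 4 * μ ^ 2)) A H := by
    have hthis := (hasDerivAt_id H).div hsqrt hS.ne'
    convert hthis using 1
    iterate 3 rfl
    have hSS : Real.sqrt (H ^ 2 + 4 * μ ^ 2) = S := rfl
    have hS2' : S ^ 2 = H ^ 2 + 4 * μ ^ 2 := hS2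
    rw [hSS, hAdef, hDdef]
    simp only [id_eq]
    field_simp
    linear_combination (-H ^ 2) * hS2'
  -- derivatives in t
  have h1t : deriv (fun t' => u1K μ t' H) t = f * Real.cos t := by
    unfold u1K
    rw [deriv_const_mul _ (Real.differentiableAt_sin), Real.deriv_sin]
  have h2t : deriv (fun t' => u2K μ t' H) t = f * (-Real.sin t) := by
    unfold u2K
    rw [deriv_const_mul _ (Real.differentiableAt_cos), Real.deriv_cos]
  -- derivatives in H
  have h1H : deriv (fun H' => u1K μ t H') H = A * Real.sin t := by
    unfold u1K
    exact (hf.mul_const (Real.sin t)).deriv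
  have h2H : deriv (fun H' => u2K μ t H') H = A * Real.cos t := by
    unfold u2K
    exact (hf.mul_const (Real.cos t)).deriv
  have hwd : deriv w H = Real.sqrt (1 + 16 * μ ^ 4 / D ^ 3) := (hw H hH).deriv
  have hw2 : (deriv w H) ^ 2 = 1 + 16 * μ ^ 4 / D ^ 3 := by
    rw [hwd, Real.sq_sqrt]
    positivity
  have hpyth := Real.sin_sq_add_cos_sq t
  refine ⟨?_, ?_, ?_⟩
  · rw [h1t, h2t, hfdef]
    have : (H / S) ^ 2 = H ^ 2 / D := by rw [div_pow, hS2]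
    nlinarith [this]
  · rw [hw2, h1H, h2H]
    have hA2 : A ^ 2 = 16 * μ ^ 4 / D ^ 3 := by
      rw [hAdef, div_pow]
      congr 1
      · ring
      · rw [mul_pow, hS2]; ring
    nlinarith [hA2]
  · rw [h1t, h2t, h1H, h2H]; ring
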